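/- If a cycle in the dependency graph involves at least one transaction from S1 (committed before transition time t) and at least one from S2 ∪ S3 (committed after t), then the cycle contains an RW edge T_j -> T_k with T_j committing after t and commit(T_k) < commit(T_j). -/
import Mathlib


inductive Lbl | WW | WR | RW
deriving DecidableEq

/-- Two transactions are concurrent if their `[start, commit]` intervals overlap. -/
def Concurrent {V : Type*} (start commit : V → ℝ) (i j : V) : Prop :=
  start i < commit j ∧ start j < commit i

/-- If a cycle of the dependency graph involves at least one transaction
committing before the transition time t and at least one committing after t,
where WW/WR edges imply commit(source) < start(target) (hence
commit(source) < commit(target)) and RW edges connect concurrent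
transactions, then the cycle contains an RW edge Tⱼ → Tₖ with Tⱼ committing
after t and commit(Tₖ) < commit(Tⱼ). -/
theorem stmt_11 {V : Type*} (E : V → V → Lbl → Prop)
    (start commit : V → ℝ) (t : ℝ)
    (hsc : ∀ T, start T < commit T)
    (hinj : Function.Injective commit)
    (hOther : ∀ i j l, E i j l → l ≠ Lbl.RW → commit i < start j)
    (hRW : ∀ i j, E i j Lbl.RW → Concurrent start commit i j)
    (n : ℕ) (hn : 0 < n) (f : ZMod n → V) (lbl : ZMod n → Lbl)
    (hcyc : ∀ i : ZMod n, E (f i) (f (i + 1)) (lbl i))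
    (a : ZMod n) (ha : commit (f a) < t)
    (b : ZMod n) (hb : t < commit (f b)) :
    ∃ i : ZMod n, lbl i = Lbl.RW ∧ t < commit (f i) ∧
      commit (f (i + 1)) < commit (f i) := by
  by_contra h
  push_neg at h
  -- every edge preserves `t < commit`
  have step : ∀ i : ZMod n, t < commit (f i) → t < commit (f (i + 1)) := by
    intro i hi
    by_cases hl : lbl i = Lbl.RW
    · exact lt_of_lt_of_le hi (h i hl hi)
    · have h1 := hOther _ _ _ (hcyc i) hl
      exact hi.trans (h1.trans (hsc _))
  have key : ∀ k : ℕ, t < commit (f (b + k)) := by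
    intro k
    induction k with
    | zero => simpa using hb
    | succ k ih =>
      have := step (b + k) ih
      have hcast : ((k : ZMod n) + 1) = ((k + 1 : ℕ) : ZMod n) := by push_cast; ring
      rw [add_assoc, hcast] at this
      exact this
  haveI : NeZero n := ⟨hn.ne'⟩
  have := key (a - b).val
  rw [ZMod.natCast_val, ZMod.cast_id, add_sub_cancel] at this
  exact absurd this (not_lt.mpr ha.le)
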